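/- arXiv:2305.16152 — 6 statements merged into one kernel-verified Lean document; each statement's English description precedes it below -/
import Mathlib

section
/- Let g ∈ ℝ be arbitrary and let (c_{n+1})_{0≤n<N} be any process with c_{n+1} : Ω → ℝ^d being 𝓕_n-measurable and E[(c_{n+1}·ΔS̃_{n+1})²] < ∞ for every n < N. Then the residual of M after subtracting the martingale transform with the optimal controls is orthogonal in L²(Q) to every such martingale transform of S̃: E[(M_N − M_0 − ∑_{n=0}^{N−1} α*_{n+1}·ΔS̃_{n+1})·(g + ∑_{n=0}^{N−1} c_{n+1}·ΔS̃_{n+1})] = 0. In particular, M_0 + ∑_{n<N} α*_{n+1}·ΔS̃_{n+1} is the L²(Q)-orthogonal projection of M_N onto the space of terminal values h + ∑_{n<N} ν_{n+1}·ΔS̃_{n+1} of martingale transforms of S̃. -/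
/-!
Write `R_n = ΔM_{n+1} - α*_{n+1}·ΔS̃_{n+1}` and `Y_n = c_{n+1}·ΔS̃_{n+1}`. Both are martingale
differences, so after telescoping `M_N - M_0` only the constant `g` and the diagonal terms
`E[R_n Y_n]` survive in the expanded product. Conditioning on `𝓕_n` and pulling out the
predictable factors turns `E[R_n Y_n]` into
`E[c_{n+1}·(E[ΔM_{n+1} ΔS̃_{n+1} | 𝓕_n] - Σ_n α*_{n+1})]`, which vanishes because `α*_{n+1}`
solves the normal equations `Σ_n α = E[ΔM_{n+1} ΔS̃_{n+1} | 𝓕_n]`.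
-/

open MeasureTheory ProbabilityTheory Finset

/-- Conditional covariance matrix `Σ_n = E[ΔS̃_{n+1} (ΔS̃_{n+1})ᵀ | 𝓕_n]` of the increments of
the discounted assets, defined entrywise via real-valued conditional expectations. -/
noncomputable def condCovMatrix {Ω : Type*} [MeasurableSpace Ω] (P : Measure Ω) {d : ℕ}
    (ℱ : ℕ → MeasurableSpace Ω) (S : ℕ → Ω → Fin d → ℝ) (n : ℕ) (ω : Ω) :
    Matrix (Fin d) (Fin d) ℝ :=
  Matrix.of fun i j =>
    (P[fun ω' => (S (n + 1) ω' i - S n ω' i) * (S (n + 1) ω' j - S n ω' j) | ℱ n]) ω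

/-- The vector `E[ΔM_{n+1} ΔS̃_{n+1} | 𝓕_n]`, defined entrywise. -/
noncomputable def condMSVec {Ω : Type*} [MeasurableSpace Ω] (P : Measure Ω) {d : ℕ}
    (ℱ : ℕ → MeasurableSpace Ω) (S : ℕ → Ω → Fin d → ℝ) (M : ℕ → Ω → ℝ) (n : ℕ) (ω : Ω) :
    Fin d → ℝ :=
  fun i => (P[fun ω' => (M (n + 1) ω' - M n ω') * (S (n + 1) ω' i - S n ω' i) | ℱ n]) ω

/-- The optimal controls `α*_{n+1} = Σ_n⁻¹ · E[ΔM_{n+1} ΔS̃_{n+1} | 𝓕_n]`. -/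
noncomputable def alphaStar {Ω : Type*} [MeasurableSpace Ω] (P : Measure Ω) {d : ℕ}
    (ℱ : ℕ → MeasurableSpace Ω) (S : ℕ → Ω → Fin d → ℝ) (M : ℕ → Ω → ℝ) (n : ℕ) (ω : Ω) :
    Fin d → ℝ :=
  (condCovMatrix P ℱ S n ω)⁻¹.mulVec (condMSVec P ℱ S M n ω)

open Matrix

theorem measurable_inv_mulVec_apply {Ω : Type*} {m : MeasurableSpace Ω} {n : Type*} [Fintype n]
    [DecidableEq n] {A : Ω → Matrix n n ℝ} {v : Ω → n → ℝ}
    (hA : ∀ i j, Measurable fun ω => A ω i j) (hv : ∀ i, Measurable fun ω => v ω i) (i : n) :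
    Measurable fun ω => ((A ω)⁻¹ *ᵥ v ω) i := by
  have hA' : Measurable fun ω => Matrix.of.symm (A ω) :=
    measurable_pi_lambda _ fun i => measurable_pi_lambda _ (hA i)
  have hdet : Continuous fun B : n → n → ℝ => (Matrix.of B).det :=
    (continuous_id (X := Matrix n n ℝ)).matrix_det
  have hadj : Continuous fun p : (n → n → ℝ) × (n → ℝ) => ((Matrix.of p.1).adjugate *ᵥ p.2) i :=
    (continuous_apply i).comp (continuous_fst.matrix_adjugate.matrix_mulVec continuous_snd)
  have hdet' := hdet.measurable.comp hA'
  have hadj' := hadj.measurable.comp (hA'.prodMk (measurable_pi_lambda _ hv))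
  simp only [Function.comp_def, Equiv.apply_symm_apply] at hdet' hadj'
  simp_rw [Matrix.inv_def, smul_mulVec, Pi.smul_apply, Ring.inverse_eq_inv', smul_eq_mul]
  exact hdet'.inv.mul hadj'

theorem stronglyMeasurable_sum_mul_sub {Ω ι : Type*} [Fintype ι] {m m' : MeasurableSpace Ω}
    (hmm' : m ≤ m') {a X₀ X₁ : Ω → ι → ℝ} (ha : ∀ i, StronglyMeasurable[m] fun ω => a ω i)
    (h₀ : ∀ i, StronglyMeasurable[m] fun ω => X₀ ω i)
    (h₁ : ∀ i, StronglyMeasurable[m'] fun ω => X₁ ω i) :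
    StronglyMeasurable[m'] fun ω => ∑ i, a ω i * (X₁ ω i - X₀ ω i) :=
  Finset.stronglyMeasurable_fun_sum _ fun i _ =>
    ((ha i).mono hmm').mul ((h₁ i).sub ((h₀ i).mono hmm'))

section CondExp

variable {Ω : Type*} {m mΩ : MeasurableSpace Ω} {P : Measure Ω}

/- Only the sum, not each product `φ i * W i`, is assumed integrable, so the pull-out property is
applied once, to the dot product as a continuous bilinear map. -/
theorem condExp_sum_mul_of_stronglyMeasurable_left {ι : Type*} [Fintype ι] {φ W : Ω → ι → ℝ}
    (hφ : ∀ i, StronglyMeasurable[m] fun ω => φ ω i) (hW : ∀ i, Integrable (fun ω => W ω i) P)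
    (hφW : Integrable (fun ω => ∑ i, φ ω i * W ω i) P) :
    P[fun ω => ∑ i, φ ω i * W ω i | m] =ᵐ[P]
      fun ω => ∑ i, φ ω i * (P[fun ω' => W ω' i | m]) ω := by
  have hφ' : StronglyMeasurable[m] φ :=
    (@measurable_pi_lambda Ω ι (fun _ => ℝ) m _ φ fun i => (hφ i).measurable).stronglyMeasurable
  have hpull := condExp_bilin_of_stronglyMeasurable_left (m := m)
    (dotProductBilin ℝ ℝ : (ι → ℝ) →ₗ[ℝ] (ι → ℝ) →ₗ[ℝ] ℝ).toContinuousBilinearMap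
    hφ' hφW (Integrable.of_eval hW)
  have hcoord : ∀ᵐ ω ∂P, ∀ i, (P[W | m]) ω i = (P[fun ω' => W ω' i | m]) ω :=
    ae_all_iff.2 fun i => (ContinuousLinearMap.proj i).comp_condExp_comm (Integrable.of_eval hW)
  filter_upwards [hpull, hcoord] with ω hω hωi
  refine hω.trans ?_
  change ∑ i, φ ω i * (P[W | m]) ω i = _
  simp only [hωi]

theorem condExp_sum_mul_eq_zero {ι : Type*} [Fintype ι] {φ W : Ω → ι → ℝ}
    (hφ : ∀ i, StronglyMeasurable[m] fun ω => φ ω i) (hW : ∀ i, Integrable (fun ω => W ω i) P)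
    (hφW : Integrable (fun ω => ∑ i, φ ω i * W ω i) P)
    (hW0 : ∀ i, P[fun ω => W ω i | m] =ᵐ[P] 0) :
    P[fun ω => ∑ i, φ ω i * W ω i | m] =ᵐ[P] 0 := by
  filter_upwards [condExp_sum_mul_of_stronglyMeasurable_left hφ hW hφW, ae_all_iff.2 hW0]
    with ω hω hω0
  simp [hω, hω0]

theorem condExp_sub_eq_zero_of_condExp_eq {f g : Ω → ℝ} (hf : Integrable f P)
    (hg : Integrable g P) (hfg : P[f | m] =ᵐ[P] P[g | m]) :
    P[fun ω => f ω - g ω | m] =ᵐ[P] 0 := by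
  filter_upwards [condExp_sub hf hg m, hfg] with ω hω hωf
  rw [← Pi.sub_def, hω, Pi.sub_apply, hωf, sub_self, Pi.zero_apply]

theorem condExp_sub_eq_zero_of_condExp_eq_stronglyMeasurable (hm : m ≤ mΩ)
    [SigmaFinite (P.trim hm)] {f g : Ω → ℝ} (hf : Integrable f P) (hg : Integrable g P)
    (hgm : StronglyMeasurable[m] g) (hfg : P[f | m] =ᵐ[P] g) :
    P[fun ω => f ω - g ω | m] =ᵐ[P] 0 :=
  condExp_sub_eq_zero_of_condExp_eq hf hg (by rwa [condExp_of_stronglyMeasurable hm hgm hg])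

theorem condExp_sum_mul_sub_eq_zero {ι : Type*} [Fintype ι] (hm : m ≤ mΩ)
    [SigmaFinite (P.trim hm)] {a X₀ X₁ : Ω → ι → ℝ}
    (ha : ∀ i, StronglyMeasurable[m] fun ω => a ω i)
    (hX₀m : ∀ i, StronglyMeasurable[m] fun ω => X₀ ω i)
    (hX₀ : ∀ i, Integrable (fun ω => X₀ ω i) P)
    (hX₁ : ∀ i, Integrable (fun ω => X₁ ω i) P)
    (hX : ∀ i, P[fun ω => X₁ ω i | m] =ᵐ[P] fun ω => X₀ ω i)
    (haX : Integrable (fun ω => ∑ i, a ω i * (X₁ ω i - X₀ ω i)) P) :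
    P[fun ω => ∑ i, a ω i * (X₁ ω i - X₀ ω i) | m] =ᵐ[P] 0 :=
  condExp_sum_mul_eq_zero ha (fun i => (hX₁ i).sub (hX₀ i)) haX fun i =>
    condExp_sub_eq_zero_of_condExp_eq_stronglyMeasurable hm (hX₁ i) (hX₀ i) (hX₀m i) (hX i)

theorem integral_eq_zero_of_condExp_eq_zero (hm : m ≤ mΩ) [SigmaFinite (P.trim hm)]
    {f : Ω → ℝ} (hf : P[f | m] =ᵐ[P] 0) :
    ∫ ω, f ω ∂P = 0 := by
  rw [← integral_condExp hm, integral_congr_ae hf, integral_zero']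

theorem integral_mul_eq_zero_of_condExp_eq_zero (hm : m ≤ mΩ) [SigmaFinite (P.trim hm)]
    {U W : Ω → ℝ} (hU : StronglyMeasurable[m] U) (hUW : Integrable (U * W) P)
    (hW : Integrable W P) (hW0 : P[W | m] =ᵐ[P] 0) :
    ∫ ω, U ω * W ω ∂P = 0 := by
  refine integral_eq_zero_of_condExp_eq_zero (f := U * W) hm ?_
  filter_upwards [condExp_mul_of_stronglyMeasurable_left hU hUW hW, hW0] with ω hω hω0
  rw [hω, Pi.mul_apply, hω0, Pi.zero_apply, mul_zero]

end CondExp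

section Regression

variable {Ω : Type*} {m mΩ : MeasurableSpace Ω} {P : Measure Ω} [IsFiniteMeasure P]
  {ι : Type*} [Fintype ι]

theorem integral_sub_sum_mul_mul_sum_eq_zero (hm : m ≤ mΩ) {ΔS α b : Ω → ι → ℝ} {ΔM : Ω → ℝ}
    (hΔS : ∀ i, MemLp (fun ω => ΔS ω i) 2 P) (hΔM : MemLp ΔM 2 P)
    (hα : ∀ i, StronglyMeasurable[m] fun ω => α ω i)
    (hb : ∀ i, StronglyMeasurable[m] fun ω => b ω i)
    (hαΔS : MemLp (fun ω => ∑ i, α ω i * ΔS ω i) 2 P)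
    (hbΔS : MemLp (fun ω => ∑ i, b ω i * ΔS ω i) 2 P)
    (hnormal : ∀ᵐ ω ∂P, (Matrix.of fun i j => (P[fun ω' => ΔS ω' i * ΔS ω' j | m]) ω) *ᵥ α ω
      = fun i => (P[fun ω' => ΔM ω' * ΔS ω' i | m]) ω) :
    ∫ ω, (ΔM ω - ∑ i, α ω i * ΔS ω i) * ∑ i, b ω i * ΔS ω i ∂P = 0 := by
  have hYM_int : Integrable (fun ω => (∑ i, b ω i * ΔS ω i) * ΔM ω) P :=
    hbΔS.integrable_mul hΔM
  have hYX_int : Integrable (fun ω => (∑ i, b ω i * ΔS ω i) * ∑ i, α ω i * ΔS ω i) P :=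
    hbΔS.integrable_mul hαΔS
  have hYM : P[fun ω => (∑ i, b ω i * ΔS ω i) * ΔM ω | m] =ᵐ[P]
      fun ω => ∑ i, b ω i * (P[fun ω' => ΔM ω' * ΔS ω' i | m]) ω := by
    have hexp : (fun ω => (∑ i, b ω i * ΔS ω i) * ΔM ω)
        = fun ω => ∑ i, b ω i * (ΔM ω * ΔS ω i) := by
      ext ω; simp only [Finset.sum_mul]; congr! 1; ring
    rw [hexp] at hYM_int ⊢
    exact condExp_sum_mul_of_stronglyMeasurable_left hb (fun i => hΔM.integrable_mul (hΔS i))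
      hYM_int
  have hYX : P[fun ω => (∑ i, b ω i * ΔS ω i) * ∑ i, α ω i * ΔS ω i | m] =ᵐ[P]
      fun ω => ∑ i, b ω i * (P[fun ω' => ΔM ω' * ΔS ω' i | m]) ω := by
    have hexp : (fun ω => (∑ i, b ω i * ΔS ω i) * ∑ i, α ω i * ΔS ω i)
        = fun ω => ∑ p : ι × ι, b ω p.1 * α ω p.2 * (ΔS ω p.1 * ΔS ω p.2) := by
      ext ω; simp only [Finset.sum_mul_sum, Fintype.sum_prod_type]; congr! 2; ring
    rw [hexp] at hYX_int ⊢
    filter_upwards [condExp_sum_mul_of_stronglyMeasurable_left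
      (φ := fun ω (p : ι × ι) => b ω p.1 * α ω p.2) (W := fun ω p => ΔS ω p.1 * ΔS ω p.2)
      (fun p => (hb p.1).mul (hα p.2)) (fun p => (hΔS p.1).integrable_mul (hΔS p.2)) hYX_int,
      hnormal] with ω hω hωα
    rw [hω, Fintype.sum_prod_type]
    refine Finset.sum_congr rfl fun i _ => ?_
    rw [← congrFun hωα i]
    simp only [mulVec, dotProduct, of_apply, Finset.mul_sum]
    exact Finset.sum_congr rfl fun j _ => by ring
  calc ∫ ω, (ΔM ω - ∑ i, α ω i * ΔS ω i) * ∑ i, b ω i * ΔS ω i ∂P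
      = ∫ ω, (∑ i, b ω i * ΔS ω i) * ΔM ω ∂P
          - ∫ ω, (∑ i, b ω i * ΔS ω i) * ∑ i, α ω i * ΔS ω i ∂P := by
        rw [← integral_sub hYM_int hYX_int]
        congr 1 with ω
        ring
    _ = 0 := by
        rw [← integral_condExp hm, ← integral_condExp hm (f := fun ω => _ * _),
          integral_congr_ae hYM, integral_congr_ae hYX, sub_self]

end Regression

theorem integral_sum_mul_const_add_sum_eq_zero {Ω : Type*} {mΩ : MeasurableSpace Ω}
    {P : Measure Ω} [IsFiniteMeasure P] {ℱ : ℕ → MeasurableSpace Ω} (hmono : Monotone ℱ)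
    (hle : ∀ n, ℱ n ≤ mΩ) {N : ℕ} {R Y : ℕ → Ω → ℝ} (g : ℝ)
    (hR : ∀ n < N, MemLp (R n) 2 P) (hY : ∀ n < N, MemLp (Y n) 2 P)
    (hRm : ∀ n < N, StronglyMeasurable[ℱ (n + 1)] (R n))
    (hYm : ∀ n < N, StronglyMeasurable[ℱ (n + 1)] (Y n))
    (hR0 : ∀ n < N, P[R n | ℱ n] =ᵐ[P] 0) (hY0 : ∀ n < N, P[Y n | ℱ n] =ᵐ[P] 0)
    (hRY : ∀ n < N, ∫ ω, R n ω * Y n ω ∂P = 0) :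
    ∫ ω, (∑ n ∈ range N, R n ω) * (g + ∑ n ∈ range N, Y n ω) ∂P = 0 := by
  have hcross : ∀ k < N, ∀ l < N, ∫ ω, R k ω * Y l ω ∂P = 0 := by
    intro k hk l hl
    rcases lt_trichotomy k l with hkl | rfl | hkl
    · exact integral_mul_eq_zero_of_condExp_eq_zero (hle l) ((hRm k hk).mono (hmono hkl))
        ((hR k hk).integrable_mul (hY l hl)) ((hY l hl).integrable one_le_two) (hY0 l hl)
    · exact hRY k hk
    · simp_rw [mul_comm (R k _)]
      exact integral_mul_eq_zero_of_condExp_eq_zero (hle k) ((hYm l hl).mono (hmono hkl))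
        ((hY l hl).integrable_mul (hR k hk)) ((hR k hk).integrable one_le_two) (hR0 k hk)
  have hRY_int : ∀ k < N, ∀ l ∈ range N, Integrable (fun ω => R k ω * Y l ω) P :=
    fun k hk l hl => (hR k hk).integrable_mul (hY l (mem_range.1 hl))
  have hterm : ∀ k < N, ∫ ω, R k ω * (g + ∑ l ∈ range N, Y l ω) ∂P = 0 := by
    intro k hk
    simp_rw [mul_add, Finset.mul_sum]
    rw [integral_add (((hR k hk).integrable one_le_two).mul_const g)
        (integrable_finsetSum _ (hRY_int k hk)), integral_finsetSum _ (hRY_int k hk),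
      integral_mul_const, integral_eq_zero_of_condExp_eq_zero (hle k) (hR0 k hk), zero_mul,
      zero_add]
    exact Finset.sum_eq_zero fun l hl => hcross k hk l (mem_range.1 hl)
  have hZ : MemLp (fun ω => g + ∑ l ∈ range N, Y l ω) 2 P :=
    (memLp_const g).add (memLp_finsetSum _ fun l hl => hY l (mem_range.1 hl))
  have hRZ_int : ∀ k ∈ range N,
      Integrable (fun ω => R k ω * (g + ∑ l ∈ range N, Y l ω)) P :=
    fun k hk => (hR k (mem_range.1 hk)).integrable_mul hZ
  simp_rw [Finset.sum_mul]
  rw [integral_finsetSum _ hRZ_int]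
  exact Finset.sum_eq_zero fun k hk => hterm k (mem_range.1 hk)

theorem stronglyMeasurable_alphaStar {Ω : Type*} [MeasurableSpace Ω] (P : Measure Ω) {d : ℕ}
    (ℱ : ℕ → MeasurableSpace Ω) (S : ℕ → Ω → Fin d → ℝ) (M : ℕ → Ω → ℝ) (n : ℕ) (j : Fin d) :
    StronglyMeasurable[ℱ n] fun ω => alphaStar P ℱ S M n ω j :=
  (measurable_inv_mulVec_apply (fun _ _ => stronglyMeasurable_condExp.measurable)
    (fun _ => stronglyMeasurable_condExp.measurable) j).stronglyMeasurable

theorem condCovMatrix_mulVec_alphaStar {Ω : Type*} [MeasurableSpace Ω] {P : Measure Ω} {d : ℕ}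
    {ℱ : ℕ → MeasurableSpace Ω} {S : ℕ → Ω → Fin d → ℝ} {M : ℕ → Ω → ℝ} {n : ℕ} {ω : Ω}
    (h : IsUnit (condCovMatrix P ℱ S n ω)) :
    condCovMatrix P ℱ S n ω *ᵥ alphaStar P ℱ S M n ω = condMSVec P ℱ S M n ω := by
  rw [alphaStar, mulVec_mulVec, mul_nonsing_inv _ ((isUnit_iff_isUnit_det _).mp h), one_mulVec]

theorem stmt0_general {Ω : Type*} [m0 : MeasurableSpace Ω] (P : Measure Ω) [IsProbabilityMeasure P]
    (d N : ℕ)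
    (ℱ : ℕ → MeasurableSpace Ω) (hmono : Monotone ℱ) (hle : ∀ n, ℱ n ≤ m0)
    (S : ℕ → Ω → Fin d → ℝ) (M : ℕ → Ω → ℝ)
    (hSadapted : ∀ n, ∀ i, StronglyMeasurable[ℱ n] fun ω => S n ω i)
    (hSL2 : ∀ n, ∀ i, MemLp (fun ω => S n ω i) 2 P)
    (hSmart : ∀ n < N, ∀ i, (P[fun ω => S (n + 1) ω i | ℱ n]) =ᵐ[P] fun ω => S n ω i)
    (hMadapted : ∀ n, StronglyMeasurable[ℱ n] (M n))
    (hML2 : ∀ n, MemLp (M n) 2 P)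
    (hMmart : ∀ n < N, (P[M (n + 1) | ℱ n]) =ᵐ[P] M n)
    (hinv : ∀ n < N, ∀ᵐ ω ∂P, IsUnit (condCovMatrix P ℱ S n ω))
    (hαL2 : ∀ n < N, MemLp
      (fun ω => ∑ i, alphaStar P ℱ S M n ω i * (S (n + 1) ω i - S n ω i)) 2 P)
    (g : ℝ) (c : ℕ → Ω → Fin d → ℝ)
    (hcpred : ∀ n < N, ∀ i, StronglyMeasurable[ℱ n] fun ω => c (n + 1) ω i)
    (hcL2 : ∀ n < N, MemLp (fun ω => ∑ i, c (n + 1) ω i * (S (n + 1) ω i - S n ω i)) 2 P) :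
    ∫ ω, (M N ω - M 0 ω -
        ∑ n ∈ Finset.range N, ∑ i, alphaStar P ℱ S M n ω i * (S (n + 1) ω i - S n ω i)) *
      (g + ∑ n ∈ Finset.range N, ∑ i, c (n + 1) ω i * (S (n + 1) ω i - S n ω i)) ∂P = 0 := by
  have hΔM : ∀ n, MemLp (fun ω => M (n + 1) ω - M n ω) 2 P :=
    fun n => (hML2 (n + 1)).sub (hML2 n)
  have hgain0 : ∀ n < N, ∀ a : Ω → Fin d → ℝ, (∀ i, StronglyMeasurable[ℱ n] fun ω => a ω i) →
      MemLp (fun ω => ∑ i, a ω i * (S (n + 1) ω i - S n ω i)) 2 P →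
      P[fun ω => ∑ i, a ω i * (S (n + 1) ω i - S n ω i) | ℱ n] =ᵐ[P] 0 :=
    fun n hn _ ha haS => condExp_sum_mul_sub_eq_zero (hle n) ha (hSadapted n)
      (fun i => (hSL2 n i).integrable one_le_two) (fun i => (hSL2 _ i).integrable one_le_two)
      (hSmart n hn) (haS.integrable one_le_two)
  have hα := stronglyMeasurable_alphaStar P ℱ S M
  have htelescope : ∀ ω, M N ω - M 0 ω
      - ∑ n ∈ range N, ∑ i, alphaStar P ℱ S M n ω i * (S (n + 1) ω i - S n ω i)
      = ∑ n ∈ range N,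
          (M (n + 1) ω - M n ω - ∑ i, alphaStar P ℱ S M n ω i * (S (n + 1) ω i - S n ω i)) :=
    fun ω => by rw [Finset.sum_sub_distrib, Finset.sum_range_sub (fun k => M k ω)]
  simp_rw [htelescope]
  refine integral_sum_mul_const_add_sum_eq_zero hmono hle g (fun n hn => (hΔM n).sub (hαL2 n hn))
    hcL2 (fun n _ => ((hMadapted _).sub ((hMadapted n).mono (hmono n.le_succ))).sub
      (stronglyMeasurable_sum_mul_sub (hmono n.le_succ) (hα n) (hSadapted n) (hSadapted _)))
    (fun n hn => stronglyMeasurable_sum_mul_sub (hmono n.le_succ) (hcpred n hn) (hSadapted n)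
      (hSadapted _))
    (fun n hn => condExp_sub_eq_zero_of_condExp_eq ((hΔM n).integrable one_le_two)
      ((hαL2 n hn).integrable one_le_two) ?_)
    (fun n hn => hgain0 n hn _ (hcpred n hn) (hcL2 n hn)) (fun n hn => ?_)
  · exact (condExp_sub_eq_zero_of_condExp_eq_stronglyMeasurable (hle n)
      ((hML2 _).integrable one_le_two) ((hML2 n).integrable one_le_two) (hMadapted n)
      (hMmart n hn)).trans (hgain0 n hn _ (hα n) (hαL2 n hn)).symm
  · exact integral_sub_sum_mul_mul_sum_eq_zero (hle n) (fun i => (hSL2 _ i).sub (hSL2 n i))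
      (hΔM n) (hα n) (hcpred n hn) (hαL2 n hn) (hcL2 n hn)
      ((hinv n hn).mono fun ω h => condCovMatrix_mulVec_alphaStar h)

/-- the residual `M_N − M_0 − ∑_{n<N} α*_{n+1}·ΔS̃_{n+1}` is orthogonal in `L²(Q)`
to every martingale transform `g + ∑_{n<N} c_{n+1}·ΔS̃_{n+1}` of `S̃` with predictable,
square-integrable integrands; hence `M_0 + ∑_{n<N} α*_{n+1}·ΔS̃_{n+1}` is the `L²(Q)`-orthogonal
projection of `M_N` onto the space of terminal values of martingale transforms of `S̃`. -/
theorem stmt0 {Ω : Type*} [m0 : MeasurableSpace Ω] (P : Measure Ω) [IsProbabilityMeasure P]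
    (d N : ℕ) (hd : 1 ≤ d) (hN : 1 ≤ N)
    (ℱ : ℕ → MeasurableSpace Ω) (hmono : Monotone ℱ) (hle : ∀ n, ℱ n ≤ m0)
    (S : ℕ → Ω → Fin d → ℝ) (M : ℕ → Ω → ℝ)
    (hSadapted : ∀ n, ∀ i, StronglyMeasurable[ℱ n] fun ω => S n ω i)
    (hSL2 : ∀ n, ∀ i, MemLp (fun ω => S n ω i) 2 P)
    (hSmart : ∀ n < N, ∀ i, (P[fun ω => S (n + 1) ω i | ℱ n]) =ᵐ[P] fun ω => S n ω i)
    (hMadapted : ∀ n, StronglyMeasurable[ℱ n] (M n))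
    (hML2 : ∀ n, MemLp (M n) 2 P)
    (hMmart : ∀ n < N, (P[M (n + 1) | ℱ n]) =ᵐ[P] M n)
    (hinv : ∀ n < N, ∀ᵐ ω ∂P, IsUnit (condCovMatrix P ℱ S n ω))
    (hαL2 : ∀ n < N, MemLp
      (fun ω => ∑ i, alphaStar P ℱ S M n ω i * (S (n + 1) ω i - S n ω i)) 2 P)
    (g : ℝ) (c : ℕ → Ω → Fin d → ℝ)
    (hcpred : ∀ n < N, ∀ i, StronglyMeasurable[ℱ n] fun ω => c (n + 1) ω i)
    (hcL2 : ∀ n < N, MemLp (fun ω => ∑ i, c (n + 1) ω i * (S (n + 1) ω i - S n ω i)) 2 P) :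
    ∫ ω, (M N ω - M 0 ω -
        ∑ n ∈ Finset.range N, ∑ i, alphaStar P ℱ S M n ω i * (S (n + 1) ω i - S n ω i)) *
      (g + ∑ n ∈ Finset.range N, ∑ i, c (n + 1) ω i * (S (n + 1) ω i - S n ω i)) ∂P = 0 :=
  stmt0_general (m0 := m0) P d N ℱ hmono hle S M hSadapted hSL2 hSmart hMadapted hML2 hMmart hinv
    hαL2 g c hcpred hcL2
end

section
/- Suppose that inf_{β ∈ ℝ^m, |β| = 1} Var(V(β)) > 0. Then for every γ > 0 the mean–variance objective F_γ attains its maximum on ℝ^m: there exists β* ∈ ℝ^m such that F_γ(β*) ≥ F_γ(β) for all β ∈ ℝ^m. -/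
/-!
The map `β ↦ V(β)(ω)` is Lipschitz with the square-integrable constant
`|S₀| (‖D‖ + |ν| ∑ⱼ ‖Kⱼ‖)`, so by dominated convergence the mean and the second moment of `V(β)`,
hence `F_γ`, are continuous. Since `R(tβ) = (1 - t) V₀ + t R(β)` for `t ≥ 0`, the variance is
`2`-homogeneous: `Var V(β) = ‖β‖² Var V(β / ‖β‖) ≥ ε ‖β‖²`, whereas `E V(β)` grows at most
linearly. So `F_γ(β) ≤ F_γ(0)` outside a ball, and the extreme value theorem gives a maximiser.
-/

open MeasureTheory ProbabilityTheory
open scoped InnerProductSpace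

/-- The random portfolio value `R(β) = V₀ + ⟨D, β⟩ − ν ∑_j |⟨K_j, β⟩|`. -/
noncomputable def Rport {Ω : Type*} {m q : ℕ} (V0 ν : ℝ)
    (D : Ω → EuclideanSpace ℝ (Fin m)) (K : Fin q → Ω → EuclideanSpace ℝ (Fin m))
    (β : EuclideanSpace ℝ (Fin m)) (ω : Ω) : ℝ :=
  V0 + ⟪D ω, β⟫_ℝ - ν * ∑ j, |⟪K j ω, β⟫_ℝ|

/-- The terminal portfolio value `V(β) = R(β) · S₀`. -/
noncomputable def Vport {Ω : Type*} {m q : ℕ} (V0 S0 ν : ℝ)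
    (D : Ω → EuclideanSpace ℝ (Fin m)) (K : Fin q → Ω → EuclideanSpace ℝ (Fin m))
    (β : EuclideanSpace ℝ (Fin m)) (ω : Ω) : ℝ :=
  Rport V0 ν D K β ω * S0

/-- The Sharpe ratio `Sharpe(β) = (E[V(β)] − V₀S₀)/√Var(V(β))`. -/
noncomputable def sharpeRatio {Ω : Type*} [MeasurableSpace Ω] (P : Measure Ω) {m q : ℕ}
    (V0 S0 ν : ℝ) (D : Ω → EuclideanSpace ℝ (Fin m)) (K : Fin q → Ω → EuclideanSpace ℝ (Fin m))
    (β : EuclideanSpace ℝ (Fin m)) : ℝ :=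
  ((∫ ω, Vport V0 S0 ν D K β ω ∂P) - V0 * S0) /
    Real.sqrt (variance (Vport V0 S0 ν D K β) P)

/-- The mean–variance objective `F_γ(β) = E[V(β)] − γ Var(V(β))`. -/
noncomputable def Fobj {Ω : Type*} [MeasurableSpace Ω] (P : Measure Ω) {m q : ℕ}
    (V0 S0 ν : ℝ) (D : Ω → EuclideanSpace ℝ (Fin m)) (K : Fin q → Ω → EuclideanSpace ℝ (Fin m))
    (γ : ℝ) (β : EuclideanSpace ℝ (Fin m)) : ℝ :=
  (∫ ω, Vport V0 S0 ν D K β ω ∂P) - γ * variance (Vport V0 S0 ν D K β) P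

/-- `β` is a `γ`-zero-gradient point: `P(⟨K_j, β⟩ = 0) = 0` for every `j` and
`E[(D − ν ∑_j sign(⟨K_j, β⟩) K_j) · S₀ · (1 − 2γS₀(R(β) − E[R(β)]))] = 0` in `ℝ^m`. -/
def ZeroGrad {Ω : Type*} [MeasurableSpace Ω] (P : Measure Ω) {m q : ℕ}
    (V0 S0 ν : ℝ) (D : Ω → EuclideanSpace ℝ (Fin m)) (K : Fin q → Ω → EuclideanSpace ℝ (Fin m))
    (γ : ℝ) (β : EuclideanSpace ℝ (Fin m)) : Prop :=
  (∀ j, P {ω | ⟪K j ω, β⟫_ℝ = 0} = 0) ∧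
  (∫ ω, (S0 * (1 - 2 * γ * S0 * (Rport V0 ν D K β ω - ∫ ω', Rport V0 ν D K β ω' ∂P))) •
      (D ω - ν • ∑ j, Real.sign ⟪K j ω, β⟫_ℝ • K j ω) ∂P) = 0

open Filter Topology

section DominatedFamily

variable {X Ω : Type*} [TopologicalSpace X] [FirstCountableTopology X] [MeasurableSpace Ω]
  {μ : Measure Ω} {F : X → Ω → ℝ}

lemma continuous_integral_of_locally_dominated
    (hmeas : ∀ x, AEStronglyMeasurable (F x) μ) (hcont : ∀ ω, Continuous (F · ω))
    (hdom : ∀ x₀, ∃ b : Ω → ℝ, Integrable b μ ∧ ∀ᶠ x in 𝓝 x₀, ∀ ω, |F x ω| ≤ b ω) :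
    Continuous fun x => ∫ ω, F x ω ∂μ := by
  refine continuous_iff_continuousAt.2 fun x₀ => ?_
  obtain ⟨b, hb, hFb⟩ := hdom x₀
  exact continuousAt_of_dominated (.of_forall hmeas)
    (hFb.mono fun x hx => .of_forall hx) hb (.of_forall fun ω => (hcont ω).continuousAt)

lemma continuous_variance_of_locally_dominated [IsProbabilityMeasure μ]
    (hmeas : ∀ x, AEStronglyMeasurable (F x) μ) (hcont : ∀ ω, Continuous (F · ω))
    (hdom : ∀ x₀, ∃ b : Ω → ℝ, MemLp b 2 μ ∧ ∀ᶠ x in 𝓝 x₀, ∀ ω, |F x ω| ≤ b ω) :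
    Continuous fun x => variance (F x) μ := by
  have hmem : ∀ x, MemLp (F x) 2 μ := by
    intro x
    obtain ⟨b, hb, hFb⟩ := hdom x
    exact hb.of_le (hmeas x) (.of_forall fun ω =>
      (Real.norm_eq_abs _).trans_le ((hFb.self_of_nhds ω).trans (le_abs_self _)))
  simp_rw [variance_eq_sub (hmem _)]
  refine .sub (continuous_integral_of_locally_dominated (fun x => (hmeas x).pow 2)
    (fun ω => (hcont ω).pow 2) fun x₀ => ?_) ((continuous_integral_of_locally_dominated hmeas hcont
    fun x₀ => ?_).pow 2)
  · obtain ⟨b, hb, hFb⟩ := hdom x₀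
    refine ⟨fun ω => b ω ^ 2, hb.integrable_sq, hFb.mono fun x hx ω => ?_⟩
    simpa using sq_le_sq' (neg_le_of_abs_le (hx ω)) (le_of_abs_le (hx ω))
  · obtain ⟨b, hb, hFb⟩ := hdom x₀
    exact ⟨b, hb.integrable one_le_two, hFb⟩

end DominatedFamily

section Portfolio

variable {Ω : Type*} {m q : ℕ} (V0 S0 ν : ℝ) (D : Ω → EuclideanSpace ℝ (Fin m))
  (K : Fin q → Ω → EuclideanSpace ℝ (Fin m))

noncomputable def portfolioLip (ω : Ω) : ℝ :=
  ‖D ω‖ + |ν| * ∑ j, ‖K j ω‖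

lemma abs_Rport_sub_le (β β' : EuclideanSpace ℝ (Fin m)) (ω : Ω) :
    |Rport V0 ν D K β ω - Rport V0 ν D K β' ω| ≤ portfolioLip ν D K ω * ‖β - β'‖ := by
  have hK : |∑ j, (|⟪K j ω, β⟫_ℝ| - |⟪K j ω, β'⟫_ℝ|)| ≤ (∑ j, ‖K j ω‖) * ‖β - β'‖ := by
    rw [Finset.sum_mul]
    refine (Finset.abs_sum_le_sum_abs _ _).trans (Finset.sum_le_sum fun j _ => ?_)
    calc |(|⟪K j ω, β⟫_ℝ| - |⟪K j ω, β'⟫_ℝ|)| ≤ |⟪K j ω, β - β'⟫_ℝ| := by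
          rw [inner_sub_right]; exact abs_abs_sub_abs_le_abs_sub _ _
      _ ≤ ‖K j ω‖ * ‖β - β'‖ := abs_real_inner_le_norm _ _
  calc |Rport V0 ν D K β ω - Rport V0 ν D K β' ω|
      = |⟪D ω, β - β'⟫_ℝ - ν * ∑ j, (|⟪K j ω, β⟫_ℝ| - |⟪K j ω, β'⟫_ℝ|)| := by
        simp only [Rport, inner_sub_right, Finset.sum_sub_distrib]; ring_nf
    _ ≤ |⟪D ω, β - β'⟫_ℝ| + |ν| * |∑ j, (|⟪K j ω, β⟫_ℝ| - |⟪K j ω, β'⟫_ℝ|)| := by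
        rw [← abs_mul]; exact abs_sub _ _
    _ ≤ ‖D ω‖ * ‖β - β'‖ + |ν| * ((∑ j, ‖K j ω‖) * ‖β - β'‖) := by
        gcongr; exact abs_real_inner_le_norm _ _
    _ = portfolioLip ν D K ω * ‖β - β'‖ := by rw [portfolioLip]; ring

@[simp]
lemma Rport_zero (ω : Ω) : Rport V0 ν D K 0 ω = V0 := by simp [Rport]

lemma Vport_zero : Vport V0 S0 ν D K 0 = fun _ => V0 * S0 := by
  ext ω; simp [Vport]

lemma abs_Vport_le (β : EuclideanSpace ℝ (Fin m)) (ω : Ω) :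
    |Vport V0 S0 ν D K β ω| ≤ |S0| * (|V0| + portfolioLip ν D K ω * ‖β‖) := by
  have h := abs_Rport_sub_le V0 ν D K β 0 ω
  rw [Rport_zero, sub_zero] at h
  rw [Vport, abs_mul, mul_comm]
  gcongr
  linarith [abs_sub_abs_le_abs_sub (Rport V0 ν D K β ω) V0]

lemma continuous_Vport (ω : Ω) : Continuous fun β => Vport V0 S0 ν D K β ω := by
  unfold Vport Rport
  fun_prop

lemma Rport_smul {t : ℝ} (ht : 0 ≤ t) (β : EuclideanSpace ℝ (Fin m)) (ω : Ω) :
    Rport V0 ν D K (t • β) ω = (1 - t) * V0 + t * Rport V0 ν D K β ω := by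
  simp only [Rport, real_inner_smul_right, abs_mul, abs_of_nonneg ht, ← Finset.mul_sum]
  ring

lemma Vport_le (β : EuclideanSpace ℝ (Fin m)) (ω : Ω) :
    Vport V0 S0 ν D K β ω ≤ V0 * S0 + |S0| * portfolioLip ν D K ω * ‖β‖ := by
  have h := abs_Rport_sub_le V0 ν D K β 0 ω
  rw [Rport_zero, sub_zero] at h
  have : (Rport V0 ν D K β ω - V0) * S0 ≤ portfolioLip ν D K ω * ‖β‖ * |S0| :=
    (le_abs_self _).trans (by rw [abs_mul]; gcongr)
  rw [Vport]
  linarith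

variable [MeasurableSpace Ω] {P : Measure Ω} {V0 S0 ν D K}

lemma memLp_portfolioLip (hD : MemLp D 2 P) (hK : ∀ j, MemLp (K j) 2 P) :
    MemLp (portfolioLip ν D K) 2 P :=
  hD.norm.add ((memLp_finsetSum _ fun j _ => (hK j).norm).const_mul _)

lemma aestronglyMeasurable_Vport (hD : MemLp D 2 P) (hK : ∀ j, MemLp (K j) 2 P)
    (β : EuclideanSpace ℝ (Fin m)) : AEStronglyMeasurable (Vport V0 S0 ν D K β) P := by
  have hD' := hD.aestronglyMeasurable
  have hK' := fun j => (hK j).aestronglyMeasurable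
  unfold Vport Rport
  fun_prop

lemma memLp_Vport_bound [IsFiniteMeasure P] (hD : MemLp D 2 P) (hK : ∀ j, MemLp (K j) 2 P)
    (r : ℝ) : MemLp (fun ω => |S0| * (|V0| + portfolioLip ν D K ω * r)) 2 P :=
  ((memLp_const |V0|).add ((memLp_portfolioLip hD hK).mul_const r)).const_mul |S0|

lemma memLp_Vport [IsFiniteMeasure P] (hD : MemLp D 2 P) (hK : ∀ j, MemLp (K j) 2 P)
    (β : EuclideanSpace ℝ (Fin m)) : MemLp (Vport V0 S0 ν D K β) 2 P :=
  (memLp_Vport_bound hD hK ‖β‖).of_le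
    (aestronglyMeasurable_Vport hD hK β) (.of_forall fun ω => (Real.norm_eq_abs _).trans_le
      ((abs_Vport_le V0 S0 ν D K β ω).trans (le_abs_self _)))

variable [IsProbabilityMeasure P]

lemma continuous_Fobj (hD : MemLp D 2 P) (hK : ∀ j, MemLp (K j) 2 P) (γ : ℝ) :
    Continuous (Fobj P V0 S0 ν D K γ) := by
  have hdom (β₀ : EuclideanSpace ℝ (Fin m)) : ∃ b : Ω → ℝ, MemLp b 2 P ∧
      ∀ᶠ β in 𝓝 β₀, ∀ ω, |Vport V0 S0 ν D K β ω| ≤ b ω := by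
    refine ⟨_, memLp_Vport_bound (V0 := V0) (S0 := S0) (ν := ν) hD hK (‖β₀‖ + 1), ?_⟩
    filter_upwards [Metric.closedBall_mem_nhds β₀ one_pos] with β hβ ω
    have hg : 0 ≤ portfolioLip ν D K ω := by unfold portfolioLip; positivity
    have hβ : ‖β‖ ≤ ‖β₀‖ + 1 := by
      simpa using norm_le_norm_add_norm_sub' β β₀ |>.trans (by gcongr; rwa [← dist_eq_norm])
    refine (abs_Vport_le V0 S0 ν D K β ω).trans ?_
    gcongr
  exact (continuous_integral_of_locally_dominated (aestronglyMeasurable_Vport hD hK)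
    (continuous_Vport V0 S0 ν D K) fun β₀ => (hdom β₀).imp fun b hb =>
      ⟨hb.1.integrable one_le_two, hb.2⟩).sub
    (continuous_const.mul (continuous_variance_of_locally_dominated
      (aestronglyMeasurable_Vport hD hK) (continuous_Vport V0 S0 ν D K) hdom))

lemma variance_Vport_smul (hD : MemLp D 2 P) (hK : ∀ j, MemLp (K j) 2 P) {t : ℝ} (ht : 0 ≤ t)
    (β : EuclideanSpace ℝ (Fin m)) :
    variance (Vport V0 S0 ν D K (t • β)) P = t ^ 2 * variance (Vport V0 S0 ν D K β) P := by
  have h : Vport V0 S0 ν D K (t • β) = fun ω => (1 - t) * V0 * S0 + t * Vport V0 S0 ν D K β ω := by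
    ext ω
    simp only [Vport, Rport_smul V0 ν D K ht]
    ring
  rw [h, variance_const_add ((aestronglyMeasurable_Vport hD hK β).const_mul t),
    variance_const_mul]

lemma mul_sq_norm_le_variance_Vport (hD : MemLp D 2 P) (hK : ∀ j, MemLp (K j) 2 P) {ε : ℝ}
    (hvar : ∀ u : EuclideanSpace ℝ (Fin m), ‖u‖ = 1 → ε ≤ variance (Vport V0 S0 ν D K u) P)
    (β : EuclideanSpace ℝ (Fin m)) : ε * ‖β‖ ^ 2 ≤ variance (Vport V0 S0 ν D K β) P := by
  rcases eq_or_ne β 0 with rfl | hβ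
  · simp
  have hu : ‖‖β‖⁻¹ • β‖ = 1 := norm_smul_inv_norm hβ
  rw [← smul_inv_smul₀ (norm_ne_zero_iff.2 hβ) β, variance_Vport_smul hD hK (norm_nonneg _),
    norm_smul, hu, Real.norm_of_nonneg (norm_nonneg _), mul_one, mul_comm]
  exact mul_le_mul_of_nonneg_left (hvar _ hu) (sq_nonneg _)

lemma Fobj_zero (γ : ℝ) : Fobj P V0 S0 ν D K γ 0 = V0 * S0 := by
  rw [Fobj, Vport_zero, variance_eq_integral aemeasurable_const]
  simp

lemma Fobj_le (hD : MemLp D 2 P) (hK : ∀ j, MemLp (K j) 2 P) {γ ε : ℝ} (hγ : 0 ≤ γ)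
    (hvar : ∀ u : EuclideanSpace ℝ (Fin m), ‖u‖ = 1 → ε ≤ variance (Vport V0 S0 ν D K u) P)
    (β : EuclideanSpace ℝ (Fin m)) :
    Fobj P V0 S0 ν D K γ β ≤
      V0 * S0 + ‖β‖ * (|S0| * ∫ ω, portfolioLip ν D K ω ∂P - γ * ε * ‖β‖) := by
  have hg := (memLp_portfolioLip (ν := ν) hD hK).integrable one_le_two
  have hmean : ∫ ω, Vport V0 S0 ν D K β ω ∂P ≤
      V0 * S0 + |S0| * (∫ ω, portfolioLip ν D K ω ∂P) * ‖β‖ := by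
    calc ∫ ω, Vport V0 S0 ν D K β ω ∂P
        ≤ ∫ ω, V0 * S0 + |S0| * portfolioLip ν D K ω * ‖β‖ ∂P := by
          refine integral_mono ((memLp_Vport hD hK β).integrable one_le_two)
            ((integrable_const _).add ((hg.const_mul _).mul_const _)) (Vport_le V0 S0 ν D K β)
      _ = V0 * S0 + |S0| * (∫ ω, portfolioLip ν D K ω ∂P) * ‖β‖ := by
          rw [integral_add (integrable_const _) ((hg.const_mul _).mul_const _),
            integral_const, integral_mul_const, integral_const_mul]
          simp
  have hv := mul_le_mul_of_nonneg_left (mul_sq_norm_le_variance_Vport hD hK hvar β) hγ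
  rw [Fobj]
  nlinarith

end Portfolio

theorem stmt1_general {Ω : Type*} [MeasurableSpace Ω] (P : Measure Ω) [IsProbabilityMeasure P]
    {m q : ℕ} (V0 S0 ν : ℝ)
    (D : Ω → EuclideanSpace ℝ (Fin m)) (K : Fin q → Ω → EuclideanSpace ℝ (Fin m))
    (hD : MemLp D 2 P) (hK : ∀ j, MemLp (K j) 2 P)
    (hvar : ∃ ε > (0 : ℝ), ∀ β : EuclideanSpace ℝ (Fin m), ‖β‖ = 1 →
      ε ≤ variance (Vport V0 S0 ν D K β) P) :
    ∀ γ : ℝ, 0 < γ → ∃ βstar : EuclideanSpace ℝ (Fin m),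
      ∀ β : EuclideanSpace ℝ (Fin m),
        Fobj P V0 S0 ν D K γ β ≤ Fobj P V0 S0 ν D K γ βstar := by
  intro γ hγ
  obtain ⟨ε, hε, hvar⟩ := hvar
  set C := |S0| * ∫ ω, portfolioLip ν D K ω ∂P
  refine (continuous_Fobj hD hK γ).exists_forall_ge' 0 ?_
  filter_upwards [tendsto_norm_cocompact_atTop.eventually_ge_atTop (C / (γ * ε))] with β hβ
  have hC : C ≤ γ * ε * ‖β‖ := by rwa [div_le_iff₀ (by positivity), mul_comm] at hβ
  rw [Fobj_zero]
  exact (Fobj_le hD hK hγ.le hvar β).trans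
    (add_le_of_nonpos_right (mul_nonpos_of_nonneg_of_nonpos (norm_nonneg β) (by linarith)))

/-- if the variance is bounded away from `0` on the unit sphere, then for every
`γ > 0` the mean–variance objective `F_γ` attains its maximum on `ℝ^m`. -/
theorem stmt1 {Ω : Type*} [MeasurableSpace Ω] (P : Measure Ω) [IsProbabilityMeasure P]
    {m q : ℕ} (hm : 0 < m) (hq : 0 < q)
    (V0 S0 ν : ℝ) (hV0 : 0 < V0) (hS0 : 0 < S0) (hν : 0 ≤ ν)
    (D : Ω → EuclideanSpace ℝ (Fin m)) (K : Fin q → Ω → EuclideanSpace ℝ (Fin m))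
    (hD : MemLp D 2 P) (hK : ∀ j, MemLp (K j) 2 P)
    (hvar : ∃ ε > (0 : ℝ), ∀ β : EuclideanSpace ℝ (Fin m), ‖β‖ = 1 →
      ε ≤ variance (Vport V0 S0 ν D K β) P) :
    ∀ γ : ℝ, 0 < γ → ∃ βstar : EuclideanSpace ℝ (Fin m),
      ∀ β : EuclideanSpace ℝ (Fin m),
        Fobj P V0 S0 ν D K γ β ≤ Fobj P V0 S0 ν D K γ βstar :=
  stmt1_general P V0 S0 ν D K hD hK hvar
end

section
/- If β* is a γ-zero-gradient point, then E[V(β*)] − V₀·S₀ = 2γ·Var(V(β*)). In particular, if Var(V(β*)) > 0, then the risk aversion, Sharpe ratio and volatility of the portfolio are related by γ = Sharpe(β*)/(2·√Var(V(β*))). -/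
open MeasureTheory ProbabilityTheory
open scoped InnerProductSpace

/-! The function `β ↦ R(β) − V₀` is positively homogeneous of degree one, and off the null sets
`{⟨K_j, β⟩ = 0}` its gradient is `D − ν ∑_j sign(⟨K_j, β⟩) K_j`. Euler's relation
`⟨β, ∇R(β)⟩ = R(β) − V₀` turns the first-order condition, paired with `β*`, into
`E[S₀(1 − 2γS₀(R − E R))(R − V₀)] = 0`, that is `S₀(E R − V₀) = 2γ S₀² Var R`. -/

lemma Real.measurable_sign : Measurable Real.sign :=
  Measurable.ite (measurableSet_lt measurable_id measurable_const) measurable_const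
    (Measurable.ite (measurableSet_lt measurable_const measurable_id)
      measurable_const measurable_const)

lemma Real.sign_mul_self_eq_abs (x : ℝ) : Real.sign x * x = |x| := by
  rcases lt_trichotomy x 0 with h | rfl | h
  · rw [Real.sign_of_neg h, abs_of_neg h, neg_one_mul]
  · simp
  · rw [Real.sign_of_pos h, abs_of_pos h, one_mul]

lemma integral_one_sub_mul_centered_mul_sub {Ω : Type*} [MeasurableSpace Ω] {μ : Measure Ω}
    [IsProbabilityMeasure μ] {X : Ω → ℝ} (hX : MemLp X 2 μ) (a b : ℝ) :
    ∫ ω, (1 - a * (X ω - μ[X])) * (X ω - b) ∂μ = (μ[X] - b) - a * Var[X; μ] := by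
  have hXc : MemLp (fun ω => X ω - μ[X]) 2 μ := hX.sub (memLp_const _)
  have hXc_int : Integrable (fun ω => X ω - μ[X]) μ := hXc.integrable one_le_two
  have hXc_mean : ∫ ω, (X ω - μ[X]) ∂μ = 0 := by
    rw [integral_sub (hX.integrable one_le_two) (integrable_const _), integral_const,
      probReal_univ, one_smul, sub_self]
  have hexpand : (fun ω => (1 - a * (X ω - μ[X])) * (X ω - b)) = fun ω =>
      ((1 - a * (μ[X] - b)) * (X ω - μ[X]) + -a * (X ω - μ[X]) ^ 2) + (μ[X] - b) := by
    funext ω; ring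
  rw [hexpand, integral_add, integral_add, integral_const_mul, integral_const_mul, hXc_mean,
    ← variance_eq_integral hX.aemeasurable, integral_const, probReal_univ, one_smul]
  · ring
  exacts [hXc_int.const_mul _, hXc.integrable_sq.const_mul _,
    (hXc_int.const_mul _).add (hXc.integrable_sq.const_mul _), integrable_const _]

section Portfolio

variable {Ω : Type*} {m q : ℕ}
  {D : Ω → EuclideanSpace ℝ (Fin m)} {K : Fin q → Ω → EuclideanSpace ℝ (Fin m)}

/-- The gradient of `β ↦ R(β)` wherever no `⟨K_j, β⟩` vanishes. -/
noncomputable def gradRport (ν : ℝ) (D : Ω → EuclideanSpace ℝ (Fin m))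
    (K : Fin q → Ω → EuclideanSpace ℝ (Fin m)) (β : EuclideanSpace ℝ (Fin m)) (ω : Ω) :
    EuclideanSpace ℝ (Fin m) :=
  D ω - ν • ∑ j, Real.sign ⟪K j ω, β⟫_ℝ • K j ω

lemma inner_gradRport (V0 ν : ℝ) (β : EuclideanSpace ℝ (Fin m)) (ω : Ω) :
    ⟪β, gradRport ν D K β ω⟫_ℝ = Rport V0 ν D K β ω - V0 := by
  simp only [gradRport, Rport, inner_sub_right, real_inner_smul_right, inner_sum,
    real_inner_comm β, Real.sign_mul_self_eq_abs]
  ring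

variable [MeasurableSpace Ω] {P : Measure Ω}

lemma memLp_Rport [IsFiniteMeasure P] (hD : MemLp D 2 P) (hK : ∀ j, MemLp (K j) 2 P) (V0 ν : ℝ)
    (β : EuclideanSpace ℝ (Fin m)) : MemLp (Rport V0 ν D K β) 2 P := by
  have habs : ∀ j, MemLp (fun ω => |⟪K j ω, β⟫_ℝ|) 2 P := fun j => by
    simpa only [Real.norm_eq_abs] using ((hK j).inner_const (𝕜 := ℝ) β).norm
  exact ((memLp_const V0).add (hD.inner_const (𝕜 := ℝ) β)).sub
    ((memLp_finsetSum Finset.univ fun j _ => habs j).const_mul ν)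

lemma memLp_gradRport (hD : MemLp D 2 P) (hK : ∀ j, MemLp (K j) 2 P) (ν : ℝ)
    (β : EuclideanSpace ℝ (Fin m)) : MemLp (gradRport ν D K β) 2 P := by
  have hsign : ∀ j, MemLp (fun ω => Real.sign ⟪K j ω, β⟫_ℝ) ⊤ P := fun j => by
    refine memLp_top_of_bound (Real.measurable_sign.comp_aemeasurable
      ((hK j).inner_const (𝕜 := ℝ) β).aemeasurable).aestronglyMeasurable 1
      (ae_of_all _ fun ω => ?_)
    rcases Real.sign_apply_eq ⟪K j ω, β⟫_ℝ with h | h | h <;> simp [h]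
  exact hD.sub ((memLp_finsetSum Finset.univ fun j _ => (hK j).smul (hsign j)).const_smul ν)

lemma ZeroGrad.integral_Vport_sub_eq [IsProbabilityMeasure P] (hD : MemLp D 2 P)
    (hK : ∀ j, MemLp (K j) 2 P) {V0 S0 ν γ : ℝ} {β : EuclideanSpace ℝ (Fin m)}
    (hzg : ZeroGrad P V0 S0 ν D K γ β) :
    (∫ ω, Vport V0 S0 ν D K β ω ∂P) - V0 * S0 = 2 * γ * variance (Vport V0 S0 ν D K β) P := by
  set R := Rport V0 ν D K β
  have hR : MemLp R 2 P := memLp_Rport hD hK V0 ν β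
  set c : Ω → ℝ := fun ω => S0 * (1 - 2 * γ * S0 * (R ω - P[R]))
  have hc : MemLp c 2 P :=
    ((memLp_const 1).sub ((hR.sub (memLp_const _)).const_mul _)).const_mul S0
  have hcW_int : Integrable (fun ω => c ω • gradRport ν D K β ω) P :=
    memLp_one_iff_integrable.mp ((memLp_gradRport hD hK ν β).smul hc)
  have hEuler : ∫ ω, c ω * (R ω - V0) ∂P = 0 := by
    have hpair : ∀ ω, c ω * (R ω - V0) = ⟪β, c ω • gradRport ν D K β ω⟫_ℝ := fun ω => by
      rw [real_inner_smul_right, inner_gradRport]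
    simp_rw [hpair]
    rw [integral_inner hcW_int, show ∫ ω, c ω • gradRport ν D K β ω ∂P = 0 from hzg.2,
      inner_zero_right]
  have hmoment : ∫ ω, c ω * (R ω - V0) ∂P = S0 * ((P[R] - V0) - 2 * γ * S0 * Var[R; P]) := by
    simp only [c, mul_assoc S0, integral_const_mul]
    rw [integral_one_sub_mul_centered_mul_sub hR]
  have hV : Vport V0 S0 ν D K β = fun ω => S0 * R ω := funext fun ω => mul_comm _ _
  rw [hV, integral_const_mul, variance_const_mul]
  linear_combination hmoment.symm.trans hEuler

end Portfolio

theorem stmt3_general {Ω : Type*} [MeasurableSpace Ω] (P : Measure Ω) [IsProbabilityMeasure P]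
    {m q : ℕ} (V0 S0 ν : ℝ)
    (D : Ω → EuclideanSpace ℝ (Fin m)) (K : Fin q → Ω → EuclideanSpace ℝ (Fin m))
    (hD : MemLp D 2 P) (hK : ∀ j, MemLp (K j) 2 P)
    (γ : ℝ) (βstar : EuclideanSpace ℝ (Fin m))
    (hzg : ZeroGrad P V0 S0 ν D K γ βstar) :
    (∫ ω, Vport V0 S0 ν D K βstar ω ∂P) - V0 * S0
        = 2 * γ * variance (Vport V0 S0 ν D K βstar) P ∧
    (0 < variance (Vport V0 S0 ν D K βstar) P →
      γ = sharpeRatio P V0 S0 ν D K βstar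
            / (2 * Real.sqrt (variance (Vport V0 S0 ν D K βstar) P))) := by
  have hmean := hzg.integral_Vport_sub_eq hD hK
  refine ⟨hmean, fun hvar => ?_⟩
  have hsqrt_pos : 0 < Real.sqrt (variance (Vport V0 S0 ν D K βstar) P) := Real.sqrt_pos.mpr hvar
  rw [sharpeRatio, hmean, div_div, eq_div_iff (by positivity)]
  linear_combination 2 * γ * Real.mul_self_sqrt hvar.le

/-- at a `γ`-zero-gradient point, `E[V(β*)] − V₀S₀ = 2γ Var(V(β*))`; in particular,
if the variance is positive, `γ = Sharpe(β*)/(2 √Var(V(β*)))`. -/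
theorem stmt3 {Ω : Type*} [MeasurableSpace Ω] (P : Measure Ω) [IsProbabilityMeasure P]
    {m q : ℕ} (hm : 0 < m) (hq : 0 < q)
    (V0 S0 ν : ℝ) (hV0 : 0 < V0) (hS0 : 0 < S0) (hν : 0 ≤ ν)
    (D : Ω → EuclideanSpace ℝ (Fin m)) (K : Fin q → Ω → EuclideanSpace ℝ (Fin m))
    (hD : MemLp D 2 P) (hK : ∀ j, MemLp (K j) 2 P)
    (γ : ℝ) (hγ : 0 < γ) (βstar : EuclideanSpace ℝ (Fin m))
    (hzg : ZeroGrad P V0 S0 ν D K γ βstar) :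
    (∫ ω, Vport V0 S0 ν D K βstar ω ∂P) - V0 * S0
        = 2 * γ * variance (Vport V0 S0 ν D K βstar) P ∧
    (0 < variance (Vport V0 S0 ν D K βstar) P →
      γ = sharpeRatio P V0 S0 ν D K βstar
            / (2 * Real.sqrt (variance (Vport V0 S0 ν D K βstar) P))) :=
  stmt3_general P V0 S0 ν D K hD hK γ βstar hzg
end

section
/- Let γ > 0 and suppose β₁ and β₂ both maximize F_γ over ℝ^m and both satisfy the identity E[V(β_i)] − V₀·S₀ = 2γ·Var(V(β_i)) (i = 1, 2). Then E[V(β₁)] = E[V(β₂)] and Var(V(β₁)) = Var(V(β₂)); consequently, if the common variance is positive, Sharpe(β₁) = Sharpe(β₂). In other words, all γ-optimal portfolios have the same Sharpe ratio. -/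
open MeasureTheory ProbabilityTheory
open scoped InnerProductSpace

theorem Fobj_eq_of_mean_excess_eq {Ω : Type*} [MeasurableSpace Ω] (P : Measure Ω) {m q : ℕ}
    (V0 S0 ν : ℝ) (D : Ω → EuclideanSpace ℝ (Fin m)) (K : Fin q → Ω → EuclideanSpace ℝ (Fin m))
    (γ : ℝ) (β : EuclideanSpace ℝ (Fin m))
    (h : (∫ ω, Vport V0 S0 ν D K β ω ∂P) - V0 * S0 = 2 * γ * variance (Vport V0 S0 ν D K β) P) :
    Fobj P V0 S0 ν D K γ β = V0 * S0 + γ * variance (Vport V0 S0 ν D K β) P := by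
  rw [Fobj]
  linarith

theorem stmt4_general {Ω : Type*} [MeasurableSpace Ω] (P : Measure Ω)
    {m q : ℕ}
    (V0 S0 ν : ℝ)
    (D : Ω → EuclideanSpace ℝ (Fin m)) (K : Fin q → Ω → EuclideanSpace ℝ (Fin m))
    (γ : ℝ) (hγ : 0 < γ) (β₁ β₂ : EuclideanSpace ℝ (Fin m))
    (hmax₁ : ∀ β : EuclideanSpace ℝ (Fin m), Fobj P V0 S0 ν D K γ β ≤ Fobj P V0 S0 ν D K γ β₁)
    (hmax₂ : ∀ β : EuclideanSpace ℝ (Fin m), Fobj P V0 S0 ν D K γ β ≤ Fobj P V0 S0 ν D K γ β₂)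
    (hid₁ : (∫ ω, Vport V0 S0 ν D K β₁ ω ∂P) - V0 * S0
        = 2 * γ * variance (Vport V0 S0 ν D K β₁) P)
    (hid₂ : (∫ ω, Vport V0 S0 ν D K β₂ ω ∂P) - V0 * S0
        = 2 * γ * variance (Vport V0 S0 ν D K β₂) P) :
    (∫ ω, Vport V0 S0 ν D K β₁ ω ∂P) = (∫ ω, Vport V0 S0 ν D K β₂ ω ∂P) ∧
    variance (Vport V0 S0 ν D K β₁) P = variance (Vport V0 S0 ν D K β₂) P ∧
    (0 < variance (Vport V0 S0 ν D K β₁) P →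
      sharpeRatio P V0 S0 ν D K β₁ = sharpeRatio P V0 S0 ν D K β₂) := by
  have hF : Fobj P V0 S0 ν D K γ β₁ = Fobj P V0 S0 ν D K γ β₂ :=
    le_antisymm (hmax₂ β₁) (hmax₁ β₂)
  rw [Fobj_eq_of_mean_excess_eq P V0 S0 ν D K γ β₁ hid₁,
    Fobj_eq_of_mean_excess_eq P V0 S0 ν D K γ β₂ hid₂] at hF
  have hvar : variance (Vport V0 S0 ν D K β₁) P = variance (Vport V0 S0 ν D K β₂) P :=
    mul_left_cancel₀ hγ.ne' (add_left_cancel hF)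
  have hmean : (∫ ω, Vport V0 S0 ν D K β₁ ω ∂P) = (∫ ω, Vport V0 S0 ν D K β₂ ω ∂P) := by
    linarith
  exact ⟨hmean, hvar, fun _ => by rw [sharpeRatio, sharpeRatio, hmean, hvar]⟩

/-- two maximizers of `F_γ` satisfying `E[V(β_i)] − V₀S₀ = 2γ Var(V(β_i))` have the
same mean and the same variance; consequently, if the common variance is positive, they have
the same Sharpe ratio. -/
theorem stmt4 {Ω : Type*} [MeasurableSpace Ω] (P : Measure Ω) [IsProbabilityMeasure P]
    {m q : ℕ} (hm : 0 < m) (hq : 0 < q)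
    (V0 S0 ν : ℝ) (hV0 : 0 < V0) (hS0 : 0 < S0) (hν : 0 ≤ ν)
    (D : Ω → EuclideanSpace ℝ (Fin m)) (K : Fin q → Ω → EuclideanSpace ℝ (Fin m))
    (hD : MemLp D 2 P) (hK : ∀ j, MemLp (K j) 2 P)
    (γ : ℝ) (hγ : 0 < γ) (β₁ β₂ : EuclideanSpace ℝ (Fin m))
    (hmax₁ : ∀ β : EuclideanSpace ℝ (Fin m), Fobj P V0 S0 ν D K γ β ≤ Fobj P V0 S0 ν D K γ β₁)
    (hmax₂ : ∀ β : EuclideanSpace ℝ (Fin m), Fobj P V0 S0 ν D K γ β ≤ Fobj P V0 S0 ν D K γ β₂)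
    (hid₁ : (∫ ω, Vport V0 S0 ν D K β₁ ω ∂P) - V0 * S0
        = 2 * γ * variance (Vport V0 S0 ν D K β₁) P)
    (hid₂ : (∫ ω, Vport V0 S0 ν D K β₂ ω ∂P) - V0 * S0
        = 2 * γ * variance (Vport V0 S0 ν D K β₂) P) :
    (∫ ω, Vport V0 S0 ν D K β₁ ω ∂P) = (∫ ω, Vport V0 S0 ν D K β₂ ω ∂P) ∧
    variance (Vport V0 S0 ν D K β₁) P = variance (Vport V0 S0 ν D K β₂) P ∧
    (0 < variance (Vport V0 S0 ν D K β₁) P →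
      sharpeRatio P V0 S0 ν D K β₁ = sharpeRatio P V0 S0 ν D K β₂) :=
  stmt4_general P V0 S0 ν D K γ hγ β₁ β₂ hmax₁ hmax₂ hid₁ hid₂
end

section
/- Let γ, γ' > 0 with γ ≠ γ'. Suppose β* maximizes F_γ over ℝ^m with E[V(β*)] − V₀S₀ = 2γ·Var(V(β*)) and Var(V(β*)) > 0, and suppose β' maximizes F_{γ'} over ℝ^m with E[V(β')] − V₀S₀ = 2γ'·Var(V(β')) and Var(V(β')) > 0. Then Sharpe(β*) = Sharpe(β'): optimal portfolios for different risk aversions have the same Sharpe ratio. -/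
/-!
The excess value `V(β) − V₀S₀` is positively homogeneous in `β`, so along a ray `F_γ(tβ) = V₀S₀ + tμ − γt²σ²` (`μ`, `σ²` the excess mean and variance of `V(β)`), whose
maximum over `t ≥ 0` is `V₀S₀ + (μ/σ)²/(4γ)`, attained at `t = μ/(2γσ²)`. The first-order
identity `μ* = 2γσ*²` says that a maximiser `β*` of `F_γ` attains this value with
`Sharpe(β*) = 2γσ*`; hence its Sharpe ratio dominates that of every portfolio with nonnegative
excess mean, in particular that of the optimum for any other risk aversion, and symmetrically.
-/

open MeasureTheory ProbabilityTheory
open scoped InnerProductSpace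

section Homogeneity

variable {Ω : Type*} {m q : ℕ} {V0 S0 ν : ℝ}
  {D : Ω → EuclideanSpace ℝ (Fin m)} {K : Fin q → Ω → EuclideanSpace ℝ (Fin m)}

lemma Vport_smul (β : EuclideanSpace ℝ (Fin m)) {t : ℝ} (ht : 0 ≤ t) (ω : Ω) :
    Vport V0 S0 ν D K (t • β) ω = t * Vport V0 S0 ν D K β ω + (1 - t) * (V0 * S0) := by
  simp only [Vport, Rport, inner_smul_right, abs_mul, abs_of_nonneg ht, ← Finset.mul_sum]
  ring

end Homogeneity

section MeanVariance

variable {Ω : Type*} [MeasurableSpace Ω] {P : Measure Ω} {m q : ℕ} {V0 S0 ν : ℝ}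
  {D : Ω → EuclideanSpace ℝ (Fin m)} {K : Fin q → Ω → EuclideanSpace ℝ (Fin m)}

lemma integrable_Vport [IsFiniteMeasure P] (hD : Integrable D P)
    (hK : ∀ j, Integrable (K j) P) (β : EuclideanSpace ℝ (Fin m)) :
    Integrable (Vport V0 S0 ν D K β) P := by
  unfold Vport Rport
  fun_prop

lemma Fobj_smul [IsProbabilityMeasure P] {β : EuclideanSpace ℝ (Fin m)}
    (hβ : Integrable (Vport V0 S0 ν D K β) P) (γ : ℝ) {t : ℝ} (ht : 0 ≤ t) :
    Fobj P V0 S0 ν D K γ (t • β) = V0 * S0 + t * ((∫ ω, Vport V0 S0 ν D K β ω ∂P) - V0 * S0)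
      - γ * (t ^ 2 * variance (Vport V0 S0 ν D K β) P) := by
  have hV : Vport V0 S0 ν D K (t • β) = fun ω ↦ t * Vport V0 S0 ν D K β ω + (1 - t) * (V0 * S0) :=
    funext (Vport_smul β ht)
  rw [Fobj, hV, variance_add_const (hβ.const_mul t).aestronglyMeasurable,
    variance_const_mul, integral_add (hβ.const_mul t) (integrable_const _), integral_const_mul,
    integral_const, probReal_univ, one_smul]
  ring

lemma sharpeRatio_le_of_forall_Fobj_le [IsProbabilityMeasure P]
    (hint : ∀ β, Integrable (Vport V0 S0 ν D K β) P) {γ : ℝ} (hγ : 0 < γ)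
    {βstar : EuclideanSpace ℝ (Fin m)}
    (hmax : ∀ β, Fobj P V0 S0 ν D K γ β ≤ Fobj P V0 S0 ν D K γ βstar)
    (hid : (∫ ω, Vport V0 S0 ν D K βstar ω ∂P) - V0 * S0
      = 2 * γ * variance (Vport V0 S0 ν D K βstar) P)
    {β : EuclideanSpace ℝ (Fin m)} (hmean : V0 * S0 ≤ ∫ ω, Vport V0 S0 ν D K β ω ∂P)
    (hvar : 0 < variance (Vport V0 S0 ν D K β) P) :
    sharpeRatio P V0 S0 ν D K β ≤ sharpeRatio P V0 S0 ν D K βstar := by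
  have hopt := hmax ((((∫ ω, Vport V0 S0 ν D K β ω ∂P) - V0 * S0) /
    (2 * γ * variance (Vport V0 S0 ν D K β) P)) • β)
  rw [Fobj_smul (hint β) γ (by positivity), Fobj] at hopt
  set μ := (∫ ω, Vport V0 S0 ν D K β ω ∂P) - V0 * S0
  set v := variance (Vport V0 S0 ν D K β) P
  set vstar := variance (Vport V0 S0 ν D K βstar) P
  have hμsq : μ ^ 2 ≤ (2 * γ) ^ 2 * vstar * v := by
    rw [← sub_add_cancel (∫ ω, Vport V0 S0 ν D K βstar ω ∂P) (V0 * S0), hid] at hopt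
    field_simp at hopt
    linarith
  have hμ : μ ≤ 2 * γ * √vstar * √v := by
    refine le_of_sq_le_sq ?_ (by positivity)
    rwa [mul_pow, mul_pow, Real.sq_sqrt (variance_nonneg _ _), Real.sq_sqrt hvar.le]
  rwa [sharpeRatio, sharpeRatio, hid, mul_div_assoc, Real.div_sqrt, div_le_iff₀ (by positivity)]

end MeanVariance

theorem stmt10_general {Ω : Type*} [MeasurableSpace Ω] (P : Measure Ω) [IsProbabilityMeasure P]
    {m q : ℕ}
    (V0 S0 ν : ℝ)
    (D : Ω → EuclideanSpace ℝ (Fin m)) (K : Fin q → Ω → EuclideanSpace ℝ (Fin m))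
    (hD : MemLp D 2 P) (hK : ∀ j, MemLp (K j) 2 P)
    (γ γ' : ℝ) (hγ : 0 < γ) (hγ' : 0 < γ')
    (βstar β' : EuclideanSpace ℝ (Fin m))
    (hmax : ∀ β : EuclideanSpace ℝ (Fin m),
      Fobj P V0 S0 ν D K γ β ≤ Fobj P V0 S0 ν D K γ βstar)
    (hid : (∫ ω, Vport V0 S0 ν D K βstar ω ∂P) - V0 * S0
      = 2 * γ * variance (Vport V0 S0 ν D K βstar) P)
    (hvar : 0 < variance (Vport V0 S0 ν D K βstar) P)
    (hmax' : ∀ β : EuclideanSpace ℝ (Fin m),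
      Fobj P V0 S0 ν D K γ' β ≤ Fobj P V0 S0 ν D K γ' β')
    (hid' : (∫ ω, Vport V0 S0 ν D K β' ω ∂P) - V0 * S0
      = 2 * γ' * variance (Vport V0 S0 ν D K β') P)
    (hvar' : 0 < variance (Vport V0 S0 ν D K β') P) :
    sharpeRatio P V0 S0 ν D K βstar = sharpeRatio P V0 S0 ν D K β' := by
  have hint : ∀ β, Integrable (Vport V0 S0 ν D K β) P :=
    integrable_Vport (hD.integrable one_le_two) fun j ↦ (hK j).integrable one_le_two
  have hmean : V0 * S0 ≤ ∫ ω, Vport V0 S0 ν D K βstar ω ∂P := by nlinarith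
  have hmean' : V0 * S0 ≤ ∫ ω, Vport V0 S0 ν D K β' ω ∂P := by nlinarith
  exact le_antisymm (sharpeRatio_le_of_forall_Fobj_le hint hγ' hmax' hid' hmean hvar)
    (sharpeRatio_le_of_forall_Fobj_le hint hγ hmax hid hmean' hvar')

/-- optimal portfolios for different risk aversions have the same Sharpe ratio. -/
theorem stmt10 {Ω : Type*} [MeasurableSpace Ω] (P : Measure Ω) [IsProbabilityMeasure P]
    {m q : ℕ} (hm : 0 < m) (hq : 0 < q)
    (V0 S0 ν : ℝ) (hV0 : 0 < V0) (hS0 : 0 < S0) (hν : 0 ≤ ν)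
    (D : Ω → EuclideanSpace ℝ (Fin m)) (K : Fin q → Ω → EuclideanSpace ℝ (Fin m))
    (hD : MemLp D 2 P) (hK : ∀ j, MemLp (K j) 2 P)
    (γ γ' : ℝ) (hγ : 0 < γ) (hγ' : 0 < γ') (hne : γ ≠ γ')
    (βstar β' : EuclideanSpace ℝ (Fin m))
    (hmax : ∀ β : EuclideanSpace ℝ (Fin m),
      Fobj P V0 S0 ν D K γ β ≤ Fobj P V0 S0 ν D K γ βstar)
    (hid : (∫ ω, Vport V0 S0 ν D K βstar ω ∂P) - V0 * S0
      = 2 * γ * variance (Vport V0 S0 ν D K βstar) P)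
    (hvar : 0 < variance (Vport V0 S0 ν D K βstar) P)
    (hmax' : ∀ β : EuclideanSpace ℝ (Fin m),
      Fobj P V0 S0 ν D K γ' β ≤ Fobj P V0 S0 ν D K γ' β')
    (hid' : (∫ ω, Vport V0 S0 ν D K β' ω ∂P) - V0 * S0
      = 2 * γ' * variance (Vport V0 S0 ν D K β') P)
    (hvar' : 0 < variance (Vport V0 S0 ν D K β') P) :
    sharpeRatio P V0 S0 ν D K βstar = sharpeRatio P V0 S0 ν D K β' :=
  stmt10_general P V0 S0 ν D K hD hK γ γ' hγ hγ' βstar β' hmax hid hvar hmax' hid' hvar'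
end

section
/- The function f : ℝ^m → ℝ defined by f(β) = E[|⟨K, β⟩|] is differentiable at β₀ with gradient ∇f(β₀) = E[sign(⟨K, β₀⟩)·K]. -/
/-!
Differentiate under the integral sign. For each `ω` the map `β ↦ |⟪K ω, β⟫|` is
`‖K ω‖`-Lipschitz, and `K` is integrable, so the integrands are dominated uniformly in `β`.
Off the null set `{⟪K, β₀⟫ = 0}` the integrand is differentiable at `β₀` with derivative
`sign ⟪K ω, β₀⟫ • ⟪K ω, ·⟫`, and integrating this derivative gives the claimed gradient.
-/

open MeasureTheory
open scoped InnerProductSpace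

namespace Real

theorem sign_eq_coe_sign (r : ℝ) : Real.sign r = (SignType.sign r : ℝ) := by
  rcases lt_trichotomy r 0 with h | rfl | h
  · simp [Real.sign_of_neg h, h]
  · simp [Real.sign_zero]
  · simp [Real.sign_of_pos h, h]

theorem abs_sign_le_one (r : ℝ) : |Real.sign r| ≤ 1 := by
  rcases Real.sign_apply_eq r with h | h | h <;> simp [h]

theorem measurable_sign_s13 : Measurable Real.sign :=
  Measurable.ite measurableSet_Iio measurable_const
    (Measurable.ite measurableSet_Ioi measurable_const measurable_const)

end Real

section AbsInner

variable {E : Type*} [NormedAddCommGroup E] [InnerProductSpace ℝ E]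

theorem lipschitzWith_abs_inner (k : E) : LipschitzWith ‖k‖₊ fun x => |⟪k, x⟫_ℝ| := by
  have h := (lipschitzWith_one_norm (E := ℝ)).comp (innerSL ℝ k).lipschitz
  rwa [one_mul, show ‖innerSL ℝ k‖₊ = ‖k‖₊ from NNReal.eq (innerSL_apply_norm ℝ k)] at h

theorem hasFDerivAt_abs_inner {k β : E} (h : ⟪k, β⟫_ℝ ≠ 0) :
    HasFDerivAt (fun x => |⟪k, x⟫_ℝ|) (innerSL ℝ (Real.sign ⟪k, β⟫_ℝ • k)) β := by
  simpa [Real.sign_eq_coe_sign] using (innerSL ℝ k).hasFDerivAt.abs h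

end AbsInner

section IntegralAbsInner

variable {Ω : Type*} [MeasurableSpace Ω] {μ : Measure Ω}

theorem MeasureTheory.Integrable.real_sign_smul {F : Type*} [NormedAddCommGroup F]
    [NormedSpace ℝ F] {f : Ω → ℝ} {g : Ω → F} (hf : AEMeasurable f μ) (hg : Integrable g μ) :
    Integrable (fun ω => Real.sign (f ω) • g ω) μ := by
  refine hg.norm.mono' ((Real.measurable_sign_s13.comp_aemeasurable hf).aestronglyMeasurable.smul
    hg.1) (ae_of_all _ fun ω => ?_)
  rw [norm_smul, Real.norm_eq_abs]
  exact mul_le_of_le_one_left (norm_nonneg _) (Real.abs_sign_le_one _)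

variable {E : Type*} [NormedAddCommGroup E] [InnerProductSpace ℝ E] [CompleteSpace E]

theorem hasGradientAt_integral_abs_inner {K : Ω → E} (hK : Integrable K μ) {β₀ : E}
    (h0 : μ {ω | ⟪K ω, β₀⟫_ℝ = 0} = 0) :
    HasGradientAt (fun β => ∫ ω, |⟪K ω, β⟫_ℝ| ∂μ) (∫ ω, Real.sign ⟪K ω, β₀⟫_ℝ • K ω ∂μ) β₀ := by
  set G : Ω → E := fun ω => Real.sign ⟪K ω, β₀⟫_ℝ • K ω
  have hinner_meas (β : E) : AEStronglyMeasurable (fun ω => ⟪K ω, β⟫_ℝ) μ :=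
    hK.1.inner aestronglyMeasurable_const
  have hG : Integrable G μ := hK.real_sign_smul (hinner_meas β₀).aemeasurable
  have hdiff : ∀ᵐ ω ∂μ, HasFDerivAt (fun β => |⟪K ω, β⟫_ℝ|) (innerSL ℝ (G ω)) β₀ :=
    measure_mono_null (fun ω hω => not_not.mp fun h => hω (hasFDerivAt_abs_inner h)) h0
  obtain ⟨-, hder⟩ := hasFDerivAt_integral_of_dominated_loc_of_lip Filter.univ_mem
    (Filter.Eventually.of_forall fun β => (hinner_meas β).norm)
    (hK.inner_const β₀).norm ((innerSL ℝ).continuous.comp_aestronglyMeasurable hG.1)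
    (ae_of_all _ fun ω => by simpa using lipschitzWith_abs_inner (K ω))
    hK.norm hdiff
  rw [(innerSL ℝ).integral_comp_comm hG] at hder
  exact hasGradientAt_iff_hasFDerivAt.mpr hder

end IntegralAbsInner

theorem stmt13_general {Ω : Type*} [MeasurableSpace Ω] (P : Measure Ω)
    {m : ℕ} (K : Ω → EuclideanSpace ℝ (Fin m))
    (hKint : Integrable K P)
    (β₀ : EuclideanSpace ℝ (Fin m)) (h0 : P {ω | ⟪K ω, β₀⟫_ℝ = 0} = 0) :
    HasGradientAt (fun β : EuclideanSpace ℝ (Fin m) => ∫ ω, |⟪K ω, β⟫_ℝ| ∂P)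
      (∫ ω, Real.sign ⟪K ω, β₀⟫_ℝ • K ω ∂P) β₀ :=
  hasGradientAt_integral_abs_inner hKint h0

/-- if `E[|K|] < ∞` and `P(⟨K, β₀⟩ = 0) = 0`, then `f(β) = E[|⟨K, β⟩|]` is
differentiable at `β₀` with gradient `∇f(β₀) = E[sign(⟨K, β₀⟩)·K]`. -/
theorem stmt13 {Ω : Type*} [MeasurableSpace Ω] (P : Measure Ω) [IsProbabilityMeasure P]
    {m : ℕ} (hm : 0 < m) (K : Ω → EuclideanSpace ℝ (Fin m))
    (hKint : Integrable K P)
    (β₀ : EuclideanSpace ℝ (Fin m)) (h0 : P {ω | ⟪K ω, β₀⟫_ℝ = 0} = 0) :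
    HasGradientAt (fun β : EuclideanSpace ℝ (Fin m) => ∫ ω, |⟪K ω, β⟫_ℝ| ∂P)
      (∫ ω, Real.sign ⟪K ω, β₀⟫_ℝ • K ω ∂P) β₀ :=
  stmt13_general P K hKint β₀ h0
end
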